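/- Let F : ℝⁿ → ℝ be continuously differentiable, let x, x' ∈ ℝⁿ, and let γ(α) = x' + α(x − x') be the straight-line path from x' to x. Define for each feature i the integrated gradient IG_i = (x_i − x'_i) ∫₀¹ (∂F/∂x_i)(γ(α)) dα. Then F(x) − F(x') = Σ_{i=1}^{n} IG_i (completeness of integrated gradients along the straight-line path). -/

import Mathlib

/-- Completeness of integrated gradients along the straight-line path:
with `IG i = (x i - x' i) * ∫₀¹ (∂F/∂x_i)(γ(α)) dα`, one has
`F x - F x' = ∑ i, IG i`. -/
theorem statement2 {n : ℕ} (F : EuclideanSpace ℝ (Fin n) → ℝ)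
    (hF : ContDiff ℝ 1 F) (x x' : EuclideanSpace ℝ (Fin n))
    (γ : ℝ → EuclideanSpace ℝ (Fin n))
    (hγ : ∀ α : ℝ, γ α = x' + α • (x - x'))
    (IG : Fin n → ℝ)
    (hIG : ∀ i, IG i =
      (x i - x' i) *
        ∫ α in (0:ℝ)..1, fderiv ℝ F (γ α) (EuclideanSpace.single i 1)) :
    F x - F x' = ∑ i, IG i := by
  have hFd := hF.differentiable one_ne_zero
  have hγd : ∀ α : ℝ, HasDerivAt γ (x - x') α := by
    intro α
    have : HasDerivAt (fun α : ℝ => x' + α • (x - x')) (x - x') α := by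
      simpa using ((hasDerivAt_id α).smul_const (x - x')).const_add x'
    exact this.congr_of_eventuallyEq (Filter.Eventually.of_forall fun t => hγ t)
  have hγc : Continuous γ := by
    have : Continuous (fun α : ℝ => x' + α • (x - x')) := by continuity
    simpa [funext hγ] using this
  have hg : ∀ α ∈ Set.uIcc (0:ℝ) 1, HasDerivAt (fun t => F (γ t))
      (fderiv ℝ F (γ α) (x - x')) α := by
    intro α _
    exact ((hFd (γ α)).hasFDerivAt.comp_hasDerivAt α (hγd α))
  have hcont : Continuous (fun α : ℝ => fderiv ℝ F (γ α) (x - x')) := by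
    have h1 : Continuous (fun α : ℝ => fderiv ℝ F (γ α)) :=
      (hF.continuous_fderiv one_ne_zero).comp hγc
    exact (ContinuousLinearMap.apply ℝ ℝ (x - x')).continuous.comp h1
  have key : F x - F x' = ∫ α in (0:ℝ)..1, fderiv ℝ F (γ α) (x - x') := by
    have := intervalIntegral.integral_eq_sub_of_hasDerivAt hg
      (hcont.intervalIntegrable 0 1)
    rw [this, hγ 0, hγ 1]
    simp
  have hsum : (x - x') = ∑ i, (x i - x' i) • EuclideanSpace.single i (1:ℝ) := by
    ext j
    rw [WithLp.ofLp_sum, Finset.sum_apply]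
    simp [EuclideanSpace.single_apply, PiLp.smul_apply, Finset.sum_ite_eq', mul_comm]
  rw [key]
  have : ∀ α : ℝ, fderiv ℝ F (γ α) (x - x') =
      ∑ i, (x i - x' i) * fderiv ℝ F (γ α) (EuclideanSpace.single i 1) := by
    intro α
    rw [hsum, map_sum]
    simp [smul_eq_mul]
  simp_rw [this]
  rw [intervalIntegral.integral_finset_sum]
  · refine Finset.sum_congr rfl fun i _ => ?_
    rw [hIG i, intervalIntegral.integral_const_mul]
  · intro i _
    have hci : Continuous (fun α : ℝ => fderiv ℝ F (γ α) (EuclideanSpace.single i 1)) := by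
      have h1 : Continuous (fun α : ℝ => fderiv ℝ F (γ α)) :=
        (hF.continuous_fderiv one_ne_zero).comp hγc
      exact (ContinuousLinearMap.apply ℝ ℝ (EuclideanSpace.single i 1)).continuous.comp h1
    exact (continuous_const.mul hci).intervalIntegrable 0 1
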